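/- arXiv:2105.13438 — 3 statements merged into one kernel-verified Lean document; each statement's English description precedes it below -/
import Mathlib

section
/- If G is a k-regular graph with no isolated vertex (so k ≥ 1), then ∂_{2p}(G) = (k-1)·ρ(G), where ρ(G) is the maximum cardinality of a 2-packing of G. -/
open Finset

variable {V : Type*}

/-- `S` is a 2-packing: closed neighbourhoods of distinct vertices of `S` are disjoint. -/
def IsPacking2 (G : SimpleGraph V) (S : Finset V) : Prop :=
  (S : Set V).Pairwise fun u v =>
    Disjoint (G.neighborSet u ∪ {u}) (G.neighborSet v ∪ {v})

/-- The external neighbourhood of `S`: vertices outside `S` with a neighbour in `S`. -/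
def extN (G : SimpleGraph V) [Fintype V] [DecidableEq V] [DecidableRel G.Adj]
    (S : Finset V) : Finset V :=
  Finset.univ.filter fun v => v ∉ S ∧ ∃ u ∈ S, G.Adj u v

/-- The differential of a set `S`: `|N_e(S)| - |S|`. -/
def diffSet (G : SimpleGraph V) [Fintype V] [DecidableEq V] [DecidableRel G.Adj]
    (S : Finset V) : ℤ :=
  ((extN G S).card : ℤ) - S.card

/-- The 2-packing differential of `G`. -/
noncomputable def pdiff2 (G : SimpleGraph V) [Fintype V] [DecidableEq V]
    [DecidableRel G.Adj] : ℤ :=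
  sSup {d : ℤ | ∃ S : Finset V, IsPacking2 G S ∧ d = diffSet G S}

/-- The packing number of `G`: maximum cardinality of a 2-packing. -/
noncomputable def packNum (G : SimpleGraph V) [Fintype V] : ℕ :=
  sSup {n : ℕ | ∃ S : Finset V, IsPacking2 G S ∧ n = S.card}

/-- `G` has no isolated vertex. -/
def NoIsolated (G : SimpleGraph V) : Prop := ∀ v : V, ∃ u, G.Adj v u

/-- `S` is a dominating set of `G`. -/
def IsDom (G : SimpleGraph V) (S : Finset V) : Prop :=
  ∀ v, v ∉ S → ∃ u ∈ S, G.Adj u v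

/-! In a 2-packing `S` no two vertices are adjacent and no two share a neighbour, so the
external neighbourhood of `S` is the disjoint union of the open neighbourhoods of its vertices.
In a `k`-regular graph this gives `∂(S) = k|S| - |S| = (k - 1)|S|` for every 2-packing, and since
`k ≥ 1` the differential is maximised exactly by a maximum 2-packing. -/

section

variable {G : SimpleGraph V} {S : Finset V}

lemma IsPacking2.not_adj (hS : IsPacking2 G S) {u v : V} (hu : u ∈ S) (hv : v ∈ S) :
    ¬ G.Adj u v := by
  intro hadj
  exact Set.disjoint_left.mp (hS hu hv hadj.ne) (Or.inl hadj) (Or.inr rfl)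

lemma IsPacking2.pairwiseDisjoint_neighborFinset [Fintype V] [DecidableRel G.Adj]
    (hS : IsPacking2 G S) : (S : Set V).PairwiseDisjoint fun v => G.neighborFinset v := by
  intro u hu v hv huv
  rw [Function.onFun, ← Finset.disjoint_coe]
  simpa only [SimpleGraph.coe_neighborFinset] using
    (hS hu hv huv).mono Set.subset_union_left Set.subset_union_left

lemma IsPacking2.extN_eq_biUnion [Fintype V] [DecidableEq V] [DecidableRel G.Adj]
    (hS : IsPacking2 G S) : extN G S = S.biUnion fun v => G.neighborFinset v := by
  ext v
  simp only [extN, mem_filter, mem_univ, true_and, mem_biUnion,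
    SimpleGraph.mem_neighborFinset]
  constructor
  · rintro ⟨-, hv⟩
    exact hv
  · rintro ⟨u, hu, hadj⟩
    exact ⟨fun hv => hS.not_adj hu hv hadj, u, hu, hadj⟩

lemma IsPacking2.diffSet_eq [Fintype V] [DecidableEq V] [DecidableRel G.Adj] {k : ℕ}
    (hS : IsPacking2 G S) (hreg : G.IsRegularOfDegree k) :
    diffSet G S = ((k : ℤ) - 1) * #S := by
  have hcard : #(extN G S) = #S * k := by
    rw [hS.extN_eq_biUnion, card_biUnion hS.pairwiseDisjoint_neighborFinset]
    simp [hreg _]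
  rw [diffSet, hcard]
  push_cast
  ring

end

lemma isPacking2_empty (G : SimpleGraph V) : IsPacking2 G ∅ := by
  simp [IsPacking2]

lemma isGreatest_packNum [Fintype V] (G : SimpleGraph V) :
    IsGreatest {n : ℕ | ∃ S : Finset V, IsPacking2 G S ∧ n = #S} (packNum G) := by
  have hbdd : BddAbove {n : ℕ | ∃ S : Finset V, IsPacking2 G S ∧ n = #S} :=
    ⟨Fintype.card V, by rintro _ ⟨S, -, rfl⟩; exact S.card_le_univ⟩
  exact ⟨Nat.sSup_mem ⟨0, ∅, isPacking2_empty G, rfl⟩ hbdd, fun _ hn => le_csSup hbdd hn⟩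

lemma NoIsolated.one_le_of_isRegularOfDegree [Nonempty V] {G : SimpleGraph V} [Fintype V]
    [DecidableRel G.Adj] {k : ℕ} (h : NoIsolated G) (hreg : G.IsRegularOfDegree k) : 1 ≤ k := by
  obtain ⟨v⟩ := ‹Nonempty V›
  rw [← hreg v, Nat.one_le_iff_ne_zero, ← Nat.pos_iff_ne_zero, G.degree_pos_iff_exists_adj]
  exact h v

theorem stmt1 {V : Type*} [Fintype V] [DecidableEq V] (G : SimpleGraph V)
    [DecidableRel G.Adj] (k : ℕ) (hreg : G.IsRegularOfDegree k) (h : NoIsolated G) :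
    pdiff2 G = ((k : ℤ) - 1) * packNum G := by
  set sizes := {n : ℕ | ∃ S : Finset V, IsPacking2 G S ∧ n = #S}
  set f : ℕ → ℤ := fun n => ((k : ℤ) - 1) * n
  have hdiff : {d : ℤ | ∃ S : Finset V, IsPacking2 G S ∧ d = diffSet G S} = f '' sizes := by
    ext d
    constructor
    · rintro ⟨S, hS, rfl⟩
      exact ⟨#S, ⟨S, hS, rfl⟩, (hS.diffSet_eq hreg).symm⟩
    · rintro ⟨_, ⟨S, hS, rfl⟩, rfl⟩
      exact ⟨S, hS, (hS.diffSet_eq hreg).symm⟩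
  have hmono : MonotoneOn f sizes := by
    -- on the empty vertex type `k` is unconstrained, but `∅` is the only packing
    cases isEmpty_or_nonempty V
    · refine Set.Subsingleton.monotoneOn _ ?_
      rintro _ ⟨S, -, rfl⟩ _ ⟨T, -, rfl⟩
      simp [Finset.eq_empty_of_isEmpty]
    · have hk : (1 : ℤ) ≤ k := by exact_mod_cast h.one_le_of_isRegularOfDegree hreg
      exact fun m _ n _ hmn => mul_le_mul_of_nonneg_left (by exact_mod_cast hmn) (by linarith)
  exact (hdiff ▸ (hmono.map_isGreatest (isGreatest_packNum G))).csSup_eq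
end

section
/- For any graph G with no isolated vertex, ρ(G)·(δ(G) - 1) ≤ ∂_{2p}(G) ≤ ρ(G)·(Δ(G) - 1), where δ(G) and Δ(G) are the minimum and maximum degrees of G. -/
open Finset

variable {V : Type*}

/-!
The closed neighbourhoods of a 2-packing `S` are pairwise disjoint, so its external
neighbourhood is the disjoint union of the open neighbourhoods of its vertices and
`∂(S) = ∑_{u ∈ S} (deg u - 1)`. Bounding each degree by `δ(G)` for a maximum 2-packing
gives the lower bound; bounding it by `Δ(G)` for an arbitrary 2-packing, together with
`|S| ≤ ρ(G)` and `Δ(G) ≥ 1`, gives the upper bound.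
-/

namespace IsPacking2

variable {G : SimpleGraph V} {S : Finset V}

lemma not_mem_of_adj (hS : IsPacking2 G S) {u v : V} (hu : u ∈ S) (huv : G.Adj u v) :
    v ∉ S := fun hv =>
  Set.disjoint_left.mp (hS hu hv (G.ne_of_adj huv)) (Set.mem_union_left _ huv)
    (Set.mem_union_right _ rfl)

lemma pairwiseDisjoint_neighborFinset_s2 [Fintype V] [DecidableRel G.Adj] (hS : IsPacking2 G S) :
    (S : Set V).PairwiseDisjoint fun u => G.neighborFinset u := by
  intro u hu v hv huv
  refine Finset.disjoint_left.mpr fun w hwu hwv => ?_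
  rw [SimpleGraph.mem_neighborFinset] at hwu hwv
  exact Set.disjoint_left.mp (hS hu hv huv) (Set.mem_union_left _ hwu) (Set.mem_union_left _ hwv)

variable [Fintype V] [DecidableEq V] [DecidableRel G.Adj]

lemma extN_eq_biUnion_s2 (hS : IsPacking2 G S) :
    extN G S = S.biUnion fun u => G.neighborFinset u := by
  ext v
  simp only [extN, mem_filter, mem_univ, true_and, mem_biUnion,
    SimpleGraph.mem_neighborFinset]
  exact ⟨fun ⟨_, u, hu, huv⟩ => ⟨u, hu, huv⟩,
    fun ⟨u, hu, huv⟩ => ⟨hS.not_mem_of_adj hu huv, u, hu, huv⟩⟩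

lemma diffSet_eq_sum (hS : IsPacking2 G S) :
    diffSet G S = ∑ u ∈ S, ((G.degree u : ℤ) - 1) := by
  have hcard : (extN G S).card = ∑ u ∈ S, G.degree u := by
    rw [hS.extN_eq_biUnion_s2, card_biUnion hS.pairwiseDisjoint_neighborFinset_s2]
    rfl
  rw [diffSet, hcard, sum_sub_distrib, sum_const, Nat.cast_sum, nsmul_one]

lemma card_mul_le_diffSet (hS : IsPacking2 G S) :
    (S.card : ℤ) * ((G.minDegree : ℤ) - 1) ≤ diffSet G S := by
  rw [hS.diffSet_eq_sum, ← nsmul_eq_mul, ← sum_const]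
  exact sum_le_sum fun u _ => by have := G.minDegree_le_degree u; omega

lemma diffSet_le_card_mul (hS : IsPacking2 G S) :
    diffSet G S ≤ (S.card : ℤ) * ((G.maxDegree : ℤ) - 1) := by
  rw [hS.diffSet_eq_sum, ← nsmul_eq_mul, ← sum_const]
  exact sum_le_sum fun u _ => by have := G.degree_le_maxDegree u; omega

end IsPacking2

section Extremal

variable [Fintype V] {G : SimpleGraph V}

lemma bddAbove_packing_cards :
    BddAbove {n : ℕ | ∃ S : Finset V, IsPacking2 G S ∧ n = S.card} :=
  ⟨Fintype.card V, fun _ ⟨T, _, hT⟩ => hT ▸ T.card_le_univ⟩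

lemma IsPacking2.card_le_packNum {S : Finset V} (hS : IsPacking2 G S) : S.card ≤ packNum G :=
  le_csSup bddAbove_packing_cards ⟨S, hS, rfl⟩

lemma exists_isPacking2_card_eq_packNum : ∃ S : Finset V, IsPacking2 G S ∧ packNum G = S.card :=
  Nat.sSup_mem (h₂ := bddAbove_packing_cards) (by exact ⟨0, ∅, isPacking2_empty G, rfl⟩)

lemma NoIsolated.one_le_maxDegree [DecidableRel G.Adj] (h : NoIsolated G) (v : V) :
    1 ≤ G.maxDegree :=
  ((G.degree_pos_iff_exists_adj v).mpr (h v)).trans_le (G.degree_le_maxDegree v)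

lemma NoIsolated.card_mul_le_packNum_mul [DecidableRel G.Adj] (h : NoIsolated G) {S : Finset V}
    (hS : IsPacking2 G S) :
    (S.card : ℤ) * ((G.maxDegree : ℤ) - 1) ≤ packNum G * ((G.maxDegree : ℤ) - 1) := by
  obtain ⟨S₀, -, hS₀⟩ := exists_isPacking2_card_eq_packNum (G := G)
  rcases S₀.eq_empty_or_nonempty with rfl | ⟨v, -⟩
  · obtain rfl : S = ∅ := card_eq_zero.mp (by simpa [hS₀] using hS.card_le_packNum)
    simp [hS₀]
  · have := h.one_le_maxDegree v
    gcongr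
    · omega
    · exact hS.card_le_packNum

variable [DecidableEq V] [DecidableRel G.Adj]

lemma diffSet_le_card (S : Finset V) : diffSet G S ≤ Fintype.card V := by
  have := (extN G S).card_le_univ
  unfold diffSet
  omega

lemma IsPacking2.diffSet_le_pdiff2 {S : Finset V} (hS : IsPacking2 G S) :
    diffSet G S ≤ pdiff2 G :=
  le_csSup ⟨Fintype.card V, fun _ ⟨T, _, hT⟩ => hT ▸ diffSet_le_card T⟩ ⟨S, hS, rfl⟩

lemma pdiff2_le {b : ℤ} (hb : ∀ S : Finset V, IsPacking2 G S → diffSet G S ≤ b) :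
    pdiff2 G ≤ b :=
  csSup_le ⟨0, ∅, isPacking2_empty G, by simp [diffSet, extN]⟩
    fun _ ⟨S, hS, hd⟩ => hd ▸ hb S hS

end Extremal

theorem stmt2 {V : Type*} [Fintype V] [DecidableEq V] (G : SimpleGraph V)
    [DecidableRel G.Adj] (h : NoIsolated G) :
    (packNum G : ℤ) * ((G.minDegree : ℤ) - 1) ≤ pdiff2 G ∧
      pdiff2 G ≤ (packNum G : ℤ) * ((G.maxDegree : ℤ) - 1) := by
  obtain ⟨S₀, hS₀, hρ⟩ := exists_isPacking2_card_eq_packNum (G := G)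
  refine ⟨?_, pdiff2_le fun S hS => hS.diffSet_le_card_mul.trans (h.card_mul_le_packNum_mul hS)⟩
  rw [hρ]
  exact hS₀.card_mul_le_diffSet.trans hS₀.diffSet_le_pdiff2
end

section
/- Let G be a connected graph with at least 2 vertices and H any graph. A set W ⊆ V(G) × V(H) is a 2-packing of the lexicographic product G ∘ H if and only if the projection P_G(W) of W onto V(G) is a 2-packing of G and |W| = |P_G(W)| (i.e., W contains at most one vertex in each fiber). -/
/-- The lexicographic product of two simple graphs. -/
def lexProd {α β : Type*} (G : SimpleGraph α) (H : SimpleGraph β) :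
    SimpleGraph (α × β) where
  Adj p q := G.Adj p.1 q.1 ∨ (p.1 = q.1 ∧ H.Adj p.2 q.2)
  symm := by
    constructor
    rintro p q (h | ⟨h1, h2⟩)
    · exact Or.inl h.symm
    · exact Or.inr ⟨h1.symm, h2.symm⟩
  loopless := by
    constructor
    rintro p (h | ⟨_, h⟩)
    · exact G.irrefl h
    · exact H.irrefl h

/-- `S` is a 2-packing: closed neighbourhoods of distinct vertices of `S` are disjoint. -/
def IsPacking2Set {V : Type*} (G : SimpleGraph V) (S : Set V) : Prop :=
  S.Pairwise fun u v => Disjoint (G.neighborSet u ∪ {u}) (G.neighborSet v ∪ {v})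

/- In `G ∘ H` every vertex of the fibre over `u` is adjacent to every vertex of the fibres over
the `G`-neighbours of `u`. So two vertices in one fibre share all those neighbours, and a 2-packing
meets each fibre at most once as soon as `G` has no isolated vertex (which connectivity and two
vertices guarantee); and for vertices in different fibres, the closed neighbourhoods in `G ∘ H`
meet exactly when those of their projections meet in `G`. -/

theorem Set.ncard_image_iff_of_finite {α β : Type*} [Finite β] {f : α → β} {s : Set α} :
    (f '' s).ncard = s.ncard ↔ Set.InjOn f s := by
  refine ⟨fun h => Set.injOn_of_ncard_image_eq h ?_, Set.InjOn.ncard_image⟩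
  by_contra hs
  have himage : f '' s = ∅ :=
    (Set.ncard_eq_zero (Set.toFinite _)).1 (h.trans (Set.Infinite.ncard hs))
  exact hs (Set.image_eq_empty.1 himage ▸ Set.finite_empty)

section LexProd

variable {α β : Type*} {G : SimpleGraph α} {H : SimpleGraph β}

@[simp]
theorem lexProd_adj {p q : α × β} :
    (lexProd G H).Adj p q ↔ G.Adj p.1 q.1 ∨ (p.1 = q.1 ∧ H.Adj p.2 q.2) :=
  Iff.rfl

theorem not_disjoint_closedNbhd_lexProd_of_fst_eq {p q : α × β} (h : p.1 = q.1) {z : α}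
    (hz : G.Adj p.1 z) :
    ¬Disjoint ((lexProd G H).neighborSet p ∪ {p}) ((lexProd G H).neighborSet q ∪ {q}) :=
  Set.not_disjoint_iff.2
    ⟨(z, p.2), Or.inl (Or.inl hz), Or.inl (Or.inl (show G.Adj q.1 z from h ▸ hz))⟩

theorem disjoint_closedNbhd_lexProd_iff {p q : α × β} (h : p.1 ≠ q.1) :
    Disjoint ((lexProd G H).neighborSet p ∪ {p}) ((lexProd G H).neighborSet q ∪ {q}) ↔
      Disjoint (G.neighborSet p.1 ∪ {p.1}) (G.neighborSet q.1 ∪ {q.1}) := by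
  have fst_mem : ∀ {r s : α × β}, s ∈ (lexProd G H).neighborSet r ∪ {r} →
      s.1 ∈ G.neighborSet r.1 ∪ {r.1} := by
    rintro r s ((hrs | ⟨hrs, -⟩) | rfl)
    · exact Or.inl hrs
    · exact Or.inr hrs.symm
    · exact Or.inr rfl
  simp only [Set.disjoint_left]
  refine ⟨fun hd z hzp hzq => ?_, fun hd s hsp hsq => hd (fst_mem hsp) (fst_mem hsq)⟩
  rcases hzp with hpz | rfl <;> rcases hzq with hqz | hzq
  · exact hd (a := (z, p.2)) (Or.inl (Or.inl hpz)) (Or.inl (Or.inl hqz))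
  · exact hd (a := q) (Or.inl (Or.inl (hzq ▸ hpz))) (Or.inr rfl)
  · exact hd (a := p) (Or.inr rfl) (Or.inl (Or.inl hqz))
  · exact h hzq

theorem isPacking2Set_lexProd_iff (hG : ∀ u, ∃ v, G.Adj u v) {W : Set (α × β)} :
    IsPacking2Set (lexProd G H) W ↔ Set.InjOn Prod.fst W ∧ IsPacking2Set G (Prod.fst '' W) := by
  constructor
  · intro hW
    refine ⟨fun p hp q hq hpq => ?_, ?_⟩
    · by_contra hne
      obtain ⟨z, hz⟩ := hG p.1
      exact not_disjoint_closedNbhd_lexProd_of_fst_eq hpq hz (hW hp hq hne)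
    · rintro _ ⟨p, hp, rfl⟩ _ ⟨q, hq, rfl⟩ hpq
      exact (disjoint_closedNbhd_lexProd_iff hpq).1 (hW hp hq (ne_of_apply_ne _ hpq))
  · rintro ⟨hinj, hpack⟩ p hp q hq hne
    have hpq : p.1 ≠ q.1 := hinj.ne hp hq hne
    exact (disjoint_closedNbhd_lexProd_iff hpq).2
      (hpack (Set.mem_image_of_mem _ hp) (Set.mem_image_of_mem _ hq) hpq)

end LexProd

theorem stmt19_general {α β : Type*} [Fintype α] (G : SimpleGraph α)
    (H : SimpleGraph β) (hconn : G.Connected) (hcard : 2 ≤ Fintype.card α)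
    (W : Set (α × β)) :
    IsPacking2Set (lexProd G H) W ↔
      IsPacking2Set G (Prod.fst '' W) ∧ W.ncard = (Prod.fst '' W).ncard := by
  have : Nontrivial α := Fintype.one_lt_card_iff_nontrivial.1 hcard
  rw [isPacking2Set_lexProd_iff hconn.preconnected.exists_adj_of_nontrivial, eq_comm,
    Set.ncard_image_iff_of_finite, and_comm]

theorem stmt19 {α β : Type*} [Fintype α] [Fintype β] (G : SimpleGraph α)
    (H : SimpleGraph β) (hconn : G.Connected) (hcard : 2 ≤ Fintype.card α)
    (W : Set (α × β)) :
    IsPacking2Set (lexProd G H) W ↔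
      IsPacking2Set G (Prod.fst '' W) ∧ W.ncard = (Prod.fst '' W).ncard :=
  stmt19_general G H hconn hcard W
end
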